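/- arXiv:2601.16659 — 2 statements merged into one kernel-verified Lean document; each statement's English description precedes it below -/
import Mathlib

section
/- Let p₁ and p₂ be probability measures on a measurable space Ω, and let f : Ω → ℝ be a measurable function with 0 ≤ f(ω) ≤ 1 for all ω. If Var_{p₁}[f] ≤ ε, then Var_{p₂}[f] ≤ ε + 6·√((1/2)·KL(p₂ ‖ p₁)). (Paper's Theorem 2: the predictive variance of an ε-robust counterfactual degrades under a model change by at most 6·√(KL/2).) -/
/-!
Tilting `p₁` by `t h` and applying Gibbs' inequality gives the Donsker–Varadhan bound
`t E_{p₂}[h] ≤ KL(p₂ ‖ p₁) + log E_{p₁}[exp (t h)]`. For `h` with values in an interval `[a, b]`,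
Hoeffding's lemma bounds the log-moment generating function of the centred `h` by
`((b - a) / 2)² t² / 2`, and optimising over `t > 0` yields the transport inequality
`E_{p₂}[h] - E_{p₁}[h] ≤ (b - a) / 2 · √(2 KL)`. Applied to `f²` and to `-f`, and combined with
`E_{p₁}[f] + E_{p₂}[f] ≤ 2`, it bounds the increase of the variance by
`3/2 · √(2 KL) ≤ 6 √(KL / 2)`.
-/

open MeasureTheory ProbabilityTheory

open Classical in
/-- The Kullback–Leibler divergence `KL(p ‖ q) = ∫ log (dp/dq) dp` when `p ≪ q`
(and the log-likelihood ratio is integrable), and `+∞` otherwise. -/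
noncomputable def klDiv {Ω : Type*} [MeasurableSpace Ω] (p q : Measure Ω) : EReal :=
  if p ≪ q ∧ Integrable (llr p q) p then ((∫ ω, llr p q ω ∂p : ℝ) : EReal) else ⊤

/-- The variance of `f` under the probability measure `p`:
`Var_p[f] = ∫ f² dp − (∫ f dp)²`. -/
noncomputable def var {Ω : Type*} [MeasurableSpace Ω] (p : Measure Ω) (f : Ω → ℝ) : ℝ :=
  (∫ ω, (f ω) ^ 2 ∂p) - (∫ ω, f ω ∂p) ^ 2

open Real
open scoped NNReal

lemma le_sqrt_of_forall_pos_mul_le {q c K : ℝ} (hc : 0 ≤ c)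
    (h : ∀ t, 0 < t → t * q ≤ K + c * t ^ 2 / 2) : q ≤ √(2 * c * K) := by
  rcases le_or_gt q 0 with hq | hq
  · exact hq.trans (sqrt_nonneg _)
  rcases hc.eq_or_lt with rfl | hc
  · have := h ((|K| + 1) / q) (by positivity)
    rw [div_mul_cancel₀ _ hq.ne'] at this
    linarith [le_abs_self K]
  · refine le_sqrt_of_sq_le ?_
    -- `t = q / c` minimises the right-hand side of `q ≤ K / t + c t / 2`
    have := h (q / c) (div_pos hq hc)
    field_simp at this
    nlinarith

section

variable {Ω : Type*} [MeasurableSpace Ω] {μ ν : Measure Ω} [IsProbabilityMeasure μ]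
  [IsProbabilityMeasure ν]

lemma integral_llr_nonneg (hμν : μ ≪ ν) (h_int : Integrable (llr μ ν) μ) :
    0 ≤ ∫ ω, llr μ ν ω ∂μ := by
  simpa using InformationTheory.integral_llr_add_sub_measure_univ_nonneg hμν h_int

/-- **Donsker–Varadhan**: the KL divergence of `μ` with respect to `ν.tilted g` is nonnegative. -/
lemma integral_le_integral_llr_add_log_integral_exp {g : Ω → ℝ} (hμν : μ ≪ ν)
    (h_int : Integrable (llr μ ν) μ) (hgμ : Integrable g μ)
    (hgν : Integrable (fun ω ↦ exp (g ω)) ν) :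
    ∫ ω, g ω ∂μ ≤ ∫ ω, llr μ ν ω ∂μ + log (∫ ω, exp (g ω) ∂ν) := by
  have : IsProbabilityMeasure (ν.tilted g) := isProbabilityMeasure_tilted hgν
  have hgibbs := integral_llr_nonneg (hμν.trans (absolutelyContinuous_tilted hgν))
    (integrable_llr_tilted_right hμν hgμ h_int hgν)
  rw [integral_llr_tilted_right hμν hgμ hgν h_int] at hgibbs
  linarith

lemma integral_sub_integral_le_of_hasSubgaussianMGF {X : Ω → ℝ} {c : ℝ≥0} (hμν : μ ≪ ν)
    (h_int : Integrable (llr μ ν) μ) (hX : Integrable X μ)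
    (hsub : HasSubgaussianMGF (fun ω ↦ X ω - ν[X]) c ν) :
    μ[X] - ν[X] ≤ √(2 * c * ∫ ω, llr μ ν ω ∂μ) := by
  refine le_sqrt_of_forall_pos_mul_le c.2 fun t _ ↦ ?_
  have hdv := integral_le_integral_llr_add_log_integral_exp (g := fun ω ↦ t * (X ω - ν[X])) hμν
    h_int ((hX.sub (integrable_const _)).const_mul t) (hsub.integrable_exp_mul t)
  have hlog : log (mgf (fun ω ↦ X ω - ν[X]) ν t) ≤ c * t ^ 2 / 2 :=
    (log_le_log (mgf_pos (hsub.integrable_exp_mul t)) (hsub.mgf_le t)).trans_eq (log_exp _)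
  rw [integral_const_mul, integral_sub hX (integrable_const _), integral_const] at hdv
  simp only [probReal_univ, smul_eq_mul, one_mul] at hdv
  rw [mgf] at hlog
  linarith

lemma integral_sub_integral_le_of_mem_Icc {X : Ω → ℝ} {a b : ℝ} (hμν : μ ≪ ν)
    (h_int : Integrable (llr μ ν) μ) (hXm : Measurable X) (hX : ∀ ω, X ω ∈ Set.Icc a b) :
    μ[X] - ν[X] ≤ |b - a| / 2 * √(2 * ∫ ω, llr μ ν ω ∂μ) := by
  have hbound := integral_sub_integral_le_of_hasSubgaussianMGF hμν h_int
    (.of_mem_Icc a b hXm.aemeasurable (ae_of_all _ hX))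
    (hasSubgaussianMGF_of_mem_Icc hXm.aemeasurable (ae_of_all _ hX))
  rwa [NNReal.coe_pow, NNReal.coe_div, coe_nnnorm, norm_eq_abs, NNReal.coe_ofNat,
    mul_comm 2, mul_assoc, sqrt_mul (sq_nonneg _), sqrt_sq (by positivity)] at hbound

lemma var_le_var_add_of_integral_sub_le {f : Ω → ℝ} (hfm : Measurable f)
    (hf : ∀ ω, f ω ∈ Set.Icc (0 : ℝ) 1) {δ : ℝ} (hδ : 0 ≤ δ)
    (hsq : ∫ ω, f ω ^ 2 ∂μ - ∫ ω, f ω ^ 2 ∂ν ≤ δ) (hmean : ∫ ω, f ω ∂ν - ∫ ω, f ω ∂μ ≤ δ) :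
    var μ f ≤ var ν f + 3 * δ := by
  have hmean_mem (ρ : Measure Ω) [IsProbabilityMeasure ρ] : ∫ ω, f ω ∂ρ ∈ Set.Icc (0 : ℝ) 1 :=
    ⟨integral_nonneg fun ω ↦ (hf ω).1, (integral_mono (.of_mem_Icc 0 1 hfm.aemeasurable
      (ae_of_all _ hf)) (integrable_const 1) fun ω ↦ (hf ω).2).trans_eq (by simp)⟩
  obtain ⟨hμ0, hμ1⟩ := hmean_mem μ
  obtain ⟨hν0, hν1⟩ := hmean_mem ν
  -- `var μ f - var ν f = (μ[f²] - ν[f²]) + (ν[f] - μ[f]) (ν[f] + μ[f])` with `ν[f] + μ[f] ≤ 2`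
  unfold var
  nlinarith

end

/-- Paper's Theorem 2: if the counterfactual is ε-robust under `p₁`, i.e.
`Var_{p₁}[f] ≤ ε`, then for any real `K` bounding `KL(p₂ ‖ p₁)`,
`Var_{p₂}[f] ≤ ε + 6·√((1/2)·K)`. -/
theorem psce_theorem2 {Ω : Type*} [MeasurableSpace Ω]
    (p₁ p₂ : Measure Ω) [IsProbabilityMeasure p₁] [IsProbabilityMeasure p₂]
    (f : Ω → ℝ) (hfm : Measurable f) (hf : ∀ ω, f ω ∈ Set.Icc (0 : ℝ) 1)
    (ε : ℝ) (hε : var p₁ f ≤ ε)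
    (K : ℝ) (hK : klDiv p₂ p₁ ≤ (K : EReal)) :
    var p₂ f ≤ ε + 6 * Real.sqrt (1 / 2 * K) := by
  obtain ⟨hac, hint⟩ : p₂ ≪ p₁ ∧ Integrable (llr p₂ p₁) p₂ := by
    by_contra hc
    rw [klDiv, if_neg hc] at hK
    simp at hK
  have hKL : ∫ ω, llr p₂ p₁ ω ∂p₂ ≤ K := by
    rw [klDiv, if_pos ⟨hac, hint⟩] at hK
    exact_mod_cast hK
  have hsq := integral_sub_integral_le_of_mem_Icc hac hint (hfm.pow_const 2)
    fun ω ↦ ⟨sq_nonneg _, pow_le_one₀ (hf ω).1 (hf ω).2⟩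
  have hneg := integral_sub_integral_le_of_mem_Icc (a := -1) (b := 0) hac hint hfm.neg
    fun ω ↦ ⟨neg_le_neg (hf ω).2, neg_nonpos.2 (hf ω).1⟩
  simp only [Pi.neg_apply, integral_neg, sub_zero, zero_sub, neg_neg, abs_one] at hsq hneg
  have hvar := var_le_var_add_of_integral_sub_le hfm hf (by positivity) hsq (by linarith)
  have hsqrt : √(2 * ∫ ω, llr p₂ p₁ ω ∂p₂) ≤ 2 * √(1 / 2 * K) :=
    calc √(2 * ∫ ω, llr p₂ p₁ ω ∂p₂) ≤ √(2 ^ 2 * (1 / 2 * K)) := sqrt_le_sqrt (by linarith)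
      _ = 2 * √(1 / 2 * K) := by rw [sqrt_mul (by norm_num), sqrt_sq zero_le_two]
  linarith [sqrt_nonneg (1 / 2 * K)]
end

section
/- Let p₁ and p₂ be probability measures on a measurable space Ω, and let f : Ω → ℝ be a measurable function with 0 ≤ f(ω) ≤ 1 for all ω. Then |Var_{p₂}[f] − Var_{p₁}[f]| ≤ 6·√((1/2)·KL(p₂ ‖ p₁)); in particular Var_{p₂}[f] ≤ Var_{p₁}[f] + 6·√((1/2)·KL(p₂ ‖ p₁)). (The paper's 'less conservative' observed-variance form of Theorem 2.) -/
open MeasureTheory ProbabilityTheory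

/-
Write `r = dp₂/dp₁`. Pointwise `|r - 1| = |√r - 1| (√r + 1)` and `(√r - 1)² ≤ r log r - r + 1`, so
AM-GM and integration against `p₁` give the Hellinger-type Pinsker bound
`∫ |r - 1| dp₁ ≤ 2 √KL`. For `g` with values in `[0,1]`, centring `g` at `1/2` gives
`|E₂ g - E₁ g| ≤ ½ ∫ |r - 1| dp₁ ≤ √KL`. Applying this to `f` and `f²`, and using
`|E₂ f + E₁ f| ≤ 2` on the squared means, the variances differ by at most `3 √KL ≤ 6 √(KL / 2)`.
-/

open Real

section

open InformationTheory

lemma sq_sqrt_sub_one_le_klFun {x : ℝ} (hx : 0 ≤ x) : (√x - 1) ^ 2 ≤ klFun x := by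
  rcases hx.eq_or_lt with rfl | hx
  · simp [klFun]
  have hs : 0 < √x := sqrt_pos.mpr hx
  -- `log √x ≥ 1 - 1/√x`, multiplied by `2x`, is the claim
  have hlog : 1 - (√x)⁻¹ ≤ log x / 2 := by
    simpa [log_sqrt hx.le] using one_sub_inv_le_log_of_pos hs
  have hsq : √x ^ 2 = x := sq_sqrt hx.le
  have h1 : √x - 1 ≤ √x * (log x / 2) := by
    have := mul_le_mul_of_nonneg_left hlog hs.le
    rwa [mul_sub, mul_one, mul_inv_cancel₀ hs.ne'] at this
  rw [klFun]
  nlinarith [mul_le_mul_of_nonneg_left h1 hs.le]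

lemma two_mul_mul_abs_sub_one_le {x : ℝ} (hx : 0 ≤ x) (t : ℝ) :
    2 * t * |x - 1| ≤ klFun x + 2 * t ^ 2 * (x + 1) := by
  have hsq : √x ^ 2 = x := sq_sqrt hx
  have hfactor : |x - 1| = |√x - 1| * (√x + 1) := by
    rw [← abs_of_nonneg (by positivity : 0 ≤ √x + 1), ← abs_mul]
    congr 1
    nlinarith
  -- AM-GM on `|√x - 1| * (t (√x + 1))`, then `(√x + 1)² ≤ 2 (x + 1)`
  have hamgm : 2 * t * |x - 1| ≤ (√x - 1) ^ 2 + t ^ 2 * (√x + 1) ^ 2 := by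
    rw [hfactor, ← sq_abs (√x - 1)]
    nlinarith [sq_nonneg (|√x - 1| - t * (√x + 1))]
  nlinarith [sq_sqrt_sub_one_le_klFun hx, sq_nonneg (√x - 1), sq_nonneg t]

variable {Ω : Type*} [MeasurableSpace Ω] {p₁ p₂ : Measure Ω}

lemma sq_integral_abs_rnDeriv_sub_one_le [IsProbabilityMeasure p₁] [IsProbabilityMeasure p₂]
    (hac : p₂ ≪ p₁) (hint : Integrable (llr p₂ p₁) p₂) :
    (∫ ω, |(p₂.rnDeriv p₁ ω).toReal - 1| ∂p₁) ^ 2 ≤ 4 * ∫ ω, llr p₂ p₁ ω ∂p₂ := by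
  set r : Ω → ℝ := fun ω ↦ (p₂.rnDeriv p₁ ω).toReal
  set L := ∫ ω, |r ω - 1| ∂p₁
  have hr : Integrable r p₁ := Measure.integrable_toReal_rnDeriv
  have hr_one : ∫ ω, r ω ∂p₁ = 1 := by simp [r, Measure.integral_toReal_rnDeriv hac]
  have hkl : Integrable (fun ω ↦ klFun (r ω)) p₁ := (integrable_klFun_rnDeriv_iff hac).mpr hint
  have hkl_eq : ∫ ω, klFun (r ω) ∂p₁ = ∫ ω, llr p₂ p₁ ω ∂p₂ := by
    simp [r, integral_klFun_rnDeriv hac hint]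
  have hr1 : Integrable (fun ω ↦ r ω + 1) p₁ := hr.add (integrable_const 1)
  -- integrate the pointwise bound with the optimal `t = L / 4`
  have key : ∫ ω, 2 * (L / 4) * |r ω - 1| ∂p₁
      ≤ ∫ ω, klFun (r ω) + 2 * (L / 4) ^ 2 * (r ω + 1) ∂p₁ :=
    integral_mono ((hr.sub (integrable_const 1)).abs.const_mul _) (hkl.add (hr1.const_mul _))
      fun ω ↦ two_mul_mul_abs_sub_one_le ENNReal.toReal_nonneg _
  rw [integral_const_mul, integral_add hkl (hr1.const_mul _), integral_const_mul,
    integral_add hr (integrable_const 1), hkl_eq, hr_one] at key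
  simp only [integral_const, probReal_univ, smul_eq_mul, mul_one] at key
  nlinarith

lemma abs_integral_sub_integral_le_mul_integral_abs_rnDeriv_sub_one
    [IsFiniteMeasure p₁] [IsFiniteMeasure p₂] (hac : p₂ ≪ p₁) {h : Ω → ℝ} {c : ℝ}
    (hm : StronglyMeasurable h) (hc : ∀ ω, |h ω| ≤ c) :
    |∫ ω, h ω ∂p₂ - ∫ ω, h ω ∂p₁|
      ≤ c * ∫ ω, |(p₂.rnDeriv p₁ ω).toReal - 1| ∂p₁ := by
  set r : Ω → ℝ := fun ω ↦ (p₂.rnDeriv p₁ ω).toReal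
  have hbdd {p : Measure Ω} [IsFiniteMeasure p] : Integrable h p :=
    .of_bound hm.aestronglyMeasurable c (ae_of_all _ hc)
  have hrh : Integrable (fun ω ↦ r ω * h ω) p₁ :=
    (integrable_toReal_rnDeriv_mul_iff hac).mpr hbdd
  have hdiff : ∫ ω, h ω ∂p₂ - ∫ ω, h ω ∂p₁ = ∫ ω, (r ω - 1) * h ω ∂p₁ := by
    rw [← integral_toReal_rnDeriv_mul hac, ← integral_sub hrh hbdd]
    simp only [sub_one_mul]
  rw [hdiff, ← integral_const_mul, ← Real.norm_eq_abs]
  refine norm_integral_le_of_norm_le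
    ((Measure.integrable_toReal_rnDeriv.sub (integrable_const 1)).abs.const_mul c)
    (ae_of_all _ fun ω ↦ ?_)
  rw [norm_mul, Real.norm_eq_abs, Real.norm_eq_abs, mul_comm]
  exact mul_le_mul_of_nonneg_right (hc ω) (abs_nonneg _)

lemma abs_integral_sub_integral_le_sqrt_integral_llr
    [IsProbabilityMeasure p₁] [IsProbabilityMeasure p₂]
    (hac : p₂ ≪ p₁) (hint : Integrable (llr p₂ p₁) p₂) {g : Ω → ℝ} (hm : Measurable g)
    (hg : ∀ ω, g ω ∈ Set.Icc (0 : ℝ) 1) :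
    |∫ ω, g ω ∂p₂ - ∫ ω, g ω ∂p₁| ≤ √(∫ ω, llr p₂ p₁ ω ∂p₂) := by
  set L := ∫ ω, |(p₂.rnDeriv p₁ ω).toReal - 1| ∂p₁
  have hgi (p : Measure Ω) [IsFiniteMeasure p] : Integrable g p :=
    .of_bound hm.aestronglyMeasurable 1 (ae_of_all _ fun ω ↦ by
      rw [Real.norm_eq_abs, abs_of_nonneg (hg ω).1]; exact (hg ω).2)
  -- centring `g` at `1/2` halves its sup norm without changing the difference of means
  have hdiff := abs_integral_sub_integral_le_mul_integral_abs_rnDeriv_sub_one hac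
    (h := fun ω ↦ g ω - 1 / 2) (c := 1 / 2) (hm.sub measurable_const).stronglyMeasurable
    fun ω ↦ abs_le.mpr ⟨by linarith [(hg ω).1], by linarith [(hg ω).2]⟩
  simp only [integral_sub (hgi p₂) (integrable_const _), integral_sub (hgi p₁) (integrable_const _),
    integral_const, probReal_univ, smul_eq_mul, one_mul, sub_sub_sub_cancel_right] at hdiff
  have hL2 := sq_integral_abs_rnDeriv_sub_one_le hac hint
  exact hdiff.trans ((le_sqrt (by positivity) (by nlinarith [sq_nonneg L])).mpr (by nlinarith))

end

lemma klDiv_le_coe_iff {Ω : Type*} [MeasurableSpace Ω] {p q : Measure Ω} {K : ℝ} :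
    klDiv p q ≤ (K : EReal) ↔ p ≪ q ∧ Integrable (llr p q) p ∧ ∫ ω, llr p q ω ∂p ≤ K := by
  unfold klDiv
  split_ifs with h
  · simp [h]
  · simp only [top_le_iff, EReal.coe_ne_top, false_iff]
    tauto

lemma abs_var_sub_var_le {Ω : Type*} [MeasurableSpace Ω] {p₁ p₂ : Measure Ω}
    [IsProbabilityMeasure p₁] [IsProbabilityMeasure p₂] {f : Ω → ℝ} (hf : ∀ ω, |f ω| ≤ 1) :
    |var p₂ f - var p₁ f| ≤ |∫ ω, f ω ^ 2 ∂p₂ - ∫ ω, f ω ^ 2 ∂p₁|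
      + 2 * |∫ ω, f ω ∂p₂ - ∫ ω, f ω ∂p₁| := by
  have hmean {p : Measure Ω} [IsProbabilityMeasure p] : |∫ ω, f ω ∂p| ≤ 1 := by
    simpa using norm_integral_le_of_norm_le_const (μ := p)
      (ae_of_all _ fun ω ↦ (Real.norm_eq_abs _).trans_le (hf ω))
  have hsum : |∫ ω, f ω ∂p₂ + ∫ ω, f ω ∂p₁| ≤ 2 :=
    (abs_add_le _ _).trans (by linarith [hmean (p := p₁), hmean (p := p₂)])
  calc |var p₂ f - var p₁ f|
      = |(∫ ω, f ω ^ 2 ∂p₂ - ∫ ω, f ω ^ 2 ∂p₁)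
          - (∫ ω, f ω ∂p₂ + ∫ ω, f ω ∂p₁) * (∫ ω, f ω ∂p₂ - ∫ ω, f ω ∂p₁)| := by
        unfold var; congr 1; ring
    _ ≤ |∫ ω, f ω ^ 2 ∂p₂ - ∫ ω, f ω ^ 2 ∂p₁|
          + |∫ ω, f ω ∂p₂ + ∫ ω, f ω ∂p₁| * |∫ ω, f ω ∂p₂ - ∫ ω, f ω ∂p₁| := by
        rw [← abs_mul]; exact abs_sub _ _
    _ ≤ _ := by gcongr

/-- The less conservative observed-variance form of the paper's Theorem 2: for `f` taking
values in `[0,1]` and any real `K` bounding `KL(p₂ ‖ p₁)`,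
`|Var_{p₂}[f] − Var_{p₁}[f]| ≤ 6·√((1/2)·K)`, and in particular
`Var_{p₂}[f] ≤ Var_{p₁}[f] + 6·√((1/2)·K)`. -/
theorem psce_theorem2_observed {Ω : Type*} [MeasurableSpace Ω]
    (p₁ p₂ : Measure Ω) [IsProbabilityMeasure p₁] [IsProbabilityMeasure p₂]
    (f : Ω → ℝ) (hfm : Measurable f) (hf : ∀ ω, f ω ∈ Set.Icc (0 : ℝ) 1)
    (K : ℝ) (hK : klDiv p₂ p₁ ≤ (K : EReal)) :
    |var p₂ f - var p₁ f| ≤ 6 * Real.sqrt (1 / 2 * K) ∧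
      var p₂ f ≤ var p₁ f + 6 * Real.sqrt (1 / 2 * K) := by
  obtain ⟨hac, hint, hKL⟩ := klDiv_le_coe_iff.mp hK
  have hmean := abs_integral_sub_integral_le_sqrt_integral_llr hac hint hfm hf
  have hsq := abs_integral_sub_integral_le_sqrt_integral_llr hac hint (hfm.pow_const 2)
    fun ω ↦ ⟨sq_nonneg _, pow_le_one₀ (hf ω).1 (hf ω).2⟩
  have hvar := abs_var_sub_var_le (p₁ := p₁) (p₂ := p₂)
    fun ω ↦ abs_le.mpr ⟨by linarith [(hf ω).1], (hf ω).2⟩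
  have hKL_nonneg : 0 ≤ ∫ ω, llr p₂ p₁ ω ∂p₂ := by
    have := InformationTheory.integral_llr_add_sub_measure_univ_nonneg hac hint
    rwa [probReal_univ, probReal_univ, add_sub_cancel_right] at this
  have hsqrt : √(∫ ω, llr p₂ p₁ ω ∂p₂) ≤ 2 * √(1 / 2 * K) := by
    calc √(∫ ω, llr p₂ p₁ ω ∂p₂) ≤ √(2 ^ 2 * (1 / 2 * K)) := sqrt_le_sqrt (by linarith)
      _ = 2 * √(1 / 2 * K) := by rw [sqrt_mul (by norm_num), sqrt_sq (by norm_num)]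
  have hbound : |var p₂ f - var p₁ f| ≤ 6 * √(1 / 2 * K) := by linarith
  exact ⟨hbound, by linarith [le_abs_self (var p₂ f - var p₁ f)]⟩
end
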